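/- Let M, N be natural numbers with 1 ≤ N < 2M. Then C_loc(M,N) ⊆ C_SDoF(M,N): the inner bound on the sum SDoF region of the two-user (M,M,N,N) MIMO X-channel with only asymmetric output feedback (Theorem 3) is contained in the sum SDoF region of the same channel with asymmetric output feedback and delayed CSIT (Theorem 1). -/

import Mathlib

/-- d_s(N,K): 0 if K ≤ N; N·K·(K−N)/(N² + K·(K−N)) if N ≤ K ≤ 2N; 2N/3 if K ≥ 2N. -/
noncomputable def ds (N K : ℕ) : ℝ :=
  if K ≤ N then 0
  else if K ≤ 2 * N then
    (N : ℝ) * (K : ℝ) * ((K : ℝ) - (N : ℝ)) /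
      ((N : ℝ) ^ 2 + (K : ℝ) * ((K : ℝ) - (N : ℝ)))
  else 2 * (N : ℝ) / 3

/-- d_s^loc(N,K): 0 if K ≤ N; K²·(K−N)/(2N² + (K−N)(3K−N)) if N ≤ K < 2N; 2N/3 if K ≥ 2N. -/
noncomputable def dsloc (N K : ℕ) : ℝ :=
  if K ≤ N then 0
  else if K < 2 * N then
    (K : ℝ) ^ 2 * ((K : ℝ) - (N : ℝ)) /
      (2 * (N : ℝ) ^ 2 + ((K : ℝ) - (N : ℝ)) * (3 * (K : ℝ) - (N : ℝ)))
  else 2 * (N : ℝ) / 3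

/-- Sum SDoF region of the (M,M,N,N) MIMO X-channel with asymmetric output feedback
and delayed CSIT (Theorem 1). -/
noncomputable def CSDoF (M N : ℕ) : Set (ℝ × ℝ) :=
  {p | 0 ≤ p.1 ∧ 0 ≤ p.2 ∧
    p.1 / ds N (2 * M) + p.2 / min (2 * (M : ℝ)) (2 * (N : ℝ)) ≤ 1 ∧
    p.1 / min (2 * (M : ℝ)) (2 * (N : ℝ)) + p.2 / ds N (2 * M) ≤ 1}

/-- Inner bound on the sum SDoF region of the (M,M,N,N) MIMO X-channel with only
asymmetric output feedback (Theorem 3). -/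
noncomputable def Cloc (M N : ℕ) : Set (ℝ × ℝ) :=
  {p | 0 ≤ p.1 ∧ 0 ≤ p.2 ∧
    p.1 / dsloc N (2 * M) + p.2 / min (2 * (M : ℝ)) (2 * (N : ℝ)) ≤ 1 ∧
    p.1 / min (2 * (M : ℝ)) (2 * (N : ℝ)) + p.2 / dsloc N (2 * M) ≤ 1}

/-!
Both regions are cut out by the same two constraints, with the intercept `d_s^loc` in place of
`d_s`, so it suffices that `d_s^loc ≤ d_s` pointwise. The only nontrivial range is `N < K < 2N`;
there, with `t = K - N`, clearing denominators reduces the comparison to `N³ + N t² - t³ ≥ 0`,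
which holds as `t ≤ N`. Since `x / 0 = 0`, a vanishing intercept makes its term disappear, so
`d_s` must also vanish whenever `d_s^loc` does.
-/

theorem div_le_div_of_nonneg_left_of_eq_zero {x a b : ℝ} (hx : 0 ≤ x) (hb : 0 ≤ b)
    (hba : b ≤ a) (h0 : b = 0 → a = 0) : x / a ≤ x / b := by
  rcases hb.eq_or_lt with rfl | hb
  · simp [h0 rfl]
  · exact div_le_div_of_nonneg_left hx hb hba

theorem dsloc_formula_le_ds_formula {n k : ℝ} (hnk : n < k) (hk : k ≤ 2 * n) :
    k ^ 2 * (k - n) / (2 * n ^ 2 + (k - n) * (3 * k - n)) ≤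
      n * k * (k - n) / (n ^ 2 + k * (k - n)) := by
  have hn : 0 < n := by linarith
  have ht : 0 < k - n := by linarith
  have hcube : (k - n) ^ 3 ≤ n ^ 3 := pow_le_pow_left₀ ht.le (by linarith) 3
  have key : k * (n ^ 2 + k * (k - n)) ≤ n * (2 * n ^ 2 + (k - n) * (3 * k - n)) := by
    nlinarith [mul_nonneg hn.le (sq_nonneg (k - n))]
  rw [div_le_div_iff₀ (by nlinarith) (by nlinarith)]
  nlinarith [mul_le_mul_of_nonneg_left key (mul_pos (by linarith : 0 < k) ht).le]

theorem dsloc_nonneg (N K : ℕ) : 0 ≤ dsloc N K := by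
  unfold dsloc
  split_ifs with hKN
  · rfl
  · have : (N : ℝ) < K := by exact_mod_cast not_le.mp hKN
    apply div_nonneg <;> nlinarith
  · positivity

theorem dsloc_le_ds (N K : ℕ) : dsloc N K ≤ ds N K := by
  unfold dsloc ds
  split_ifs with hKN hKlt hKle hKle
  · rfl
  · exact dsloc_formula_le_ds_formula (by exact_mod_cast not_le.mp hKN) (by exact_mod_cast hKle)
  · omega
  · obtain rfl : K = 2 * N := by omega
    have hN : (N : ℝ) ≠ 0 := by norm_cast; omega
    refine le_of_eq ?_
    push_cast
    field_simp
    ring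
  · rfl

theorem ds_eq_zero_of_dsloc_eq_zero (N K : ℕ) (h : dsloc N K = 0) : ds N K = 0 := by
  unfold dsloc at h
  unfold ds
  split_ifs at h ⊢ with hKN hKlt hKle
  · rfl
  · have hNK : (N : ℝ) < K := by exact_mod_cast not_le.mp hKN
    have hK0 : (0 : ℝ) < K := (Nat.cast_nonneg N).trans_lt hNK
    refine absurd h (div_pos ?_ ?_).ne' <;> nlinarith [mul_pos (pow_pos hK0 2) (sub_pos.mpr hNK)]
  · simp only [div_eq_zero_iff, mul_eq_zero, OfNat.ofNat_ne_zero, Nat.cast_eq_zero, false_or,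
      or_false] at h
    omega
  · omega
  · exact h

theorem Cloc_subset_CSDoF_general (M N : ℕ) : Cloc M N ⊆ CSDoF M N := by
  have hdiv : ∀ x : ℝ, 0 ≤ x → x / ds N (2 * M) ≤ x / dsloc N (2 * M) := fun x hx =>
    div_le_div_of_nonneg_left_of_eq_zero hx (dsloc_nonneg N _) (dsloc_le_ds N _)
      (ds_eq_zero_of_dsloc_eq_zero N _)
  rintro p ⟨hx, hy, h1, h2⟩
  exact ⟨hx, hy, (add_le_add_left (hdiv _ hx) _).trans h1, (add_le_add_right (hdiv _ hy) _).trans h2⟩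

/-- For 1 ≤ N < 2M, C_loc(M,N) ⊆ C_SDoF(M,N). -/
theorem Cloc_subset_CSDoF (M N : ℕ) (hN : 1 ≤ N) (hM : N < 2 * M) :
    Cloc M N ⊆ CSDoF M N :=
  Cloc_subset_CSDoF_general M N
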